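/- The program of Listing 2 is safe but not aperiodic: letting P₂ = prog(y){ x := true; while(x){ y := y−1; x := declass(y > 0) } return y }, where y holds a binary number and −1 is binary decrement, P₂ is Δsafe for the variable typing environment Γ with Γ(x) = 1 and Γ(y) = 0 and a suitable safe operator typing environment Δ, but P₂ is not aperiodic: there is an input store for which the loop guard x is evaluated under two e-equivalent stores, one within the evaluation subtree of the other. -/

import Mathlib

namespace Declass

/-! ### Words over a finite alphabet -/

/-- Words over the alphabet `σ`. -/
abbrev Word (σ : Type) := List σ

/-- An operator signature: a set of operators, each with an arity and a total semantics. -/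
structure OpSig (σ : Type) where
  Op : Type
  ar : Op → ℕ
  sem : (o : Op) → (Fin (ar o) → Word σ) → Word σ

variable {σ : Type}

/-! ### Syntax -/

/-- Expressions of the first-order imperative language. -/
inductive Expr (O : OpSig σ) : Type where
  | var : ℕ → Expr O
  | op : (o : O.Op) → (Fin (O.ar o) → Expr O) → Expr O
  | declass : Expr O → Expr O

/-- Statements of the first-order imperative language. -/
inductive Stmt (O : OpSig σ) : Type where
  | skip : Stmt O
  | assign : ℕ → Expr O → Stmt O
  | seq : Stmt O → Stmt O → Stmt O
  | ite : Expr O → Stmt O → Stmt O → Stmt O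
  | whileLoop : Expr O → Stmt O → Stmt O
  | brk : Expr O → Stmt O

/-- A program `prog(x̄){s return x}`. -/
structure Prog (O : OpSig σ) where
  arity : ℕ
  params : Fin arity → ℕ
  body : Stmt O
  ret : ℕ

/-! ### Semantics -/

/-- A memory store: a total map from variables to words. -/
abbrev Store (σ : Type) := ℕ → Word σ

variable {O : OpSig σ}

/-- The initial store `μ∅[x̄ ← w̄]`. -/
def initStore (P : Prog O) (ws : Fin P.arity → Word σ) : Store σ :=
  (List.ofFn fun i => (P.params i, ws i)).foldl
    (fun μ p => Function.update μ p.1 p.2) (fun _ => ([] : Word σ))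

/-- Big-step semantics of expressions; `one` is the letter `1`, the word `[one]`
is the boolean `true`, and the one-argument declassification `declass(e)`
evaluates to `1^(|w|)`. -/
inductive EvalE (one : σ) : Store σ → Expr O → Word σ → Prop where
  | var : ∀ (μ : Store σ) (x : ℕ), EvalE one μ (.var x) (μ x)
  | op : ∀ (μ : Store σ) (o : O.Op) (es : Fin (O.ar o) → Expr O) (ws : Fin (O.ar o) → Word σ),
      (∀ i, EvalE one μ (es i) (ws i)) → EvalE one μ (.op o es) (O.sem o ws)
  | declass : ∀ (μ : Store σ) (e : Expr O) (w : Word σ),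
      EvalE one μ e w → EvalE one μ (.declass e) (List.replicate w.length one)

/-- Big-step semantics of statements. The boolean flag is `true` for `⊤` (normal
termination) and `false` for `⊥` (a break aborted the control flow). -/
inductive EvalS (one : σ) : Store σ → Stmt O → Bool × Store σ → Prop where
  | skip : ∀ μ : Store σ, EvalS one μ .skip (true, μ)
  | assign : ∀ (μ : Store σ) (x : ℕ) (e : Expr O) (w : Word σ), EvalE one μ e w →
      EvalS one μ (.assign x e) (true, Function.update μ x w)
  | seq_top : ∀ (μ μ' : Store σ) (r : Bool × Store σ) (s₁ s₂ : Stmt O),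
      EvalS one μ s₁ (true, μ') → EvalS one μ' s₂ r → EvalS one μ (.seq s₁ s₂) r
  | seq_brk : ∀ (μ μ' : Store σ) (s₁ s₂ : Stmt O),
      EvalS one μ s₁ (false, μ') → EvalS one μ (.seq s₁ s₂) (false, μ')
  | ite_true : ∀ (μ : Store σ) (e : Expr O) (s₁ s₀ : Stmt O) (r : Bool × Store σ),
      EvalE one μ e [one] → EvalS one μ s₁ r → EvalS one μ (.ite e s₁ s₀) r
  | ite_false : ∀ (μ : Store σ) (e : Expr O) (s₁ s₀ : Stmt O) (w : Word σ) (r : Bool × Store σ),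
      EvalE one μ e w → w ≠ [one] → EvalS one μ s₀ r → EvalS one μ (.ite e s₁ s₀) r
  | while_false : ∀ (μ : Store σ) (e : Expr O) (s : Stmt O) (w : Word σ),
      EvalE one μ e w → w ≠ [one] → EvalS one μ (.whileLoop e s) (true, μ)
  | while_true : ∀ (μ μ' : Store σ) (e : Expr O) (s : Stmt O) (b : Bool),
      EvalE one μ e [one] → EvalS one μ (.seq s (.whileLoop e s)) (b, μ') →
      EvalS one μ (.whileLoop e s) (true, μ')
  | brk_false : ∀ (μ : Store σ) (e : Expr O) (w : Word σ),
      EvalE one μ e w → w ≠ [one] → EvalS one μ (.brk e) (true, μ)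
  | brk_true : ∀ (μ : Store σ) (e : Expr O),
      EvalE one μ e [one] → EvalS one μ (.brk e) (false, μ)

/-- `⟦P⟧(w̄) = v`. -/
def Prog.Outputs (one : σ) (P : Prog O) (ws : Fin P.arity → Word σ) (v : Word σ) : Prop :=
  ∃ μ' : Store σ, EvalS one (initStore P ws) P.body (true, μ') ∧ μ' P.ret = v

/-- `P ∈ TERM`: the partial function `⟦P⟧` is total. -/
def Prog.Terminating (one : σ) (P : Prog O) : Prop :=
  ∀ ws : Fin P.arity → Word σ, ∃ v, P.Outputs one ws v

/-- The (partial) function `⟦P⟧` coincides with the total function `f`. -/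
def Prog.Computes (one : σ) (P : Prog O) (f : (Fin P.arity → Word σ) → Word σ) : Prop :=
  ∀ (ws : Fin P.arity → Word σ) (v : Word σ), P.Outputs one ws v ↔ v = f ws

/-! ### Operator classification -/

/-- `maxᵢ |wᵢ|`. -/
def maxSize {k : ℕ} (ws : Fin k → Word σ) : ℕ :=
  Finset.univ.sup fun i => (ws i).length

/-- A neutral operator: a predicate (into `{0,1}`) or a subword operation. -/
def NeutralOp (zero one : σ) (O : OpSig σ) (o : O.Op) : Prop :=
  (∀ ws, O.sem o ws = [zero] ∨ O.sem o ws = [one]) ∨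
  ∃ i : Fin (O.ar o), ∀ ws, (O.sem o ws) <:+: (ws i)

/-- A positive operator: `|⟦op⟧(w̄)| ≤ maxᵢ |wᵢ| + c`. -/
def PositiveOp (O : OpSig σ) (o : O.Op) : Prop :=
  ∃ c : ℕ, ∀ ws, (O.sem o ws).length ≤ maxSize ws + c

/-- A polynomial operator: `|⟦op⟧(w̄)| ≤ Q(maxᵢ |wᵢ|)`. -/
def PolyOp (O : OpSig σ) (o : O.Op) : Prop :=
  ∃ Q : Polynomial ℕ, ∀ ws, (O.sem o ws).length ≤ Q.eval (maxSize ws)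

/-! ### Polynomial-time computability (FP) -/

/-- The trivial encoding of words over `σ` as strings over `σ`. -/
def wordEncoding (σ : Type) [Fintype σ] : Computability.Encoding (Word σ) σ where
  encode := id
  decode := some
  decode_encode _ := rfl

/-- Encoding of tuples of words, using a fresh separator symbol. -/
def tupleEncoding (σ : Type) [Fintype σ] [DecidableEq σ] (n : ℕ) :
    Computability.Encoding (Fin n → Word σ) (Option σ) where
  encode ws := List.intercalate [none] (List.ofFn fun i => (ws i).map some)
  decode l :=
    if h0 : n = 0 then
      if l = [] then some (fun i => absurd i.2 (by omega)) else none
    else if h : (@List.splitOn _ instBEqOfDecidableEq none l).length = n then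
      some fun i => ((@List.splitOn _ instBEqOfDecidableEq none l).get (Fin.cast h.symm i)).reduceOption
    else none
  decode_encode ws := by
    by_cases h0 : n = 0
    · subst h0
      have henc : List.intercalate [none] (List.ofFn fun i : Fin 0 => (ws i).map some)
          = ([] : List (Option σ)) := by simp [List.intercalate]
      simp only [henc, dif_pos rfl, if_pos rfl]
      exact congrArg some (funext fun i => i.elim0)
    · have hsplit : (@List.splitOn _ instBEqOfDecidableEq none
            (List.intercalate [none] (List.ofFn fun i => (ws i).map some)))
          = List.ofFn fun i => (ws i).map some := by
        letI : BEq (Option σ) := instBEqOfDecidableEq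
        apply List.splitOn_intercalate
        · intro l hl
          simp only [List.mem_ofFn] at hl
          obtain ⟨i, rfl⟩ := hl
          simp
        · simp only [ne_eq, List.ofFn_eq_nil_iff]
          omega
      have hred : ∀ w : Word σ, (w.map some).reduceOption = w := by
        intro w
        induction w with
        | nil => rfl
        | cons a t ih => simpa [List.reduceOption_cons_of_some] using ih
      simp only [h0, dite_false, hsplit, List.length_ofFn, dite_true, dif_neg, dif_pos]
      congr 1
      funext i
      simp [hsplit, List.getElem_ofFn, hred]

/-- `f ∈ FP`: `f` is computable in polynomial time by a (deterministic) Turing machine. -/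
def InFP [Fintype σ] [DecidableEq σ] {n : ℕ} (f : (Fin n → Word σ) → Word σ) : Prop :=
  Nonempty (Turing.TM2ComputableInPolyTime (tupleEncoding σ n).encode (wordEncoding σ).encode f)

/-! ### The level-based type system -/

/-- An operator typing environment: `Δ(op)(τin, τout)` is a set of admissible
functional levels `τ₁ → … → τ_{ar(op)+1}` (viewed as tuples). -/
abbrev OpEnv (O : OpSig σ) := (o : O.Op) → ℕ → ℕ → Set (Fin (O.ar o + 1) → ℕ)

/-- Typing judgments for expressions: `Γ, Δ ⊢^{τin}_{τout} e : τ`. -/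
inductive TypE (Γ : ℕ → ℕ) (Δ : OpEnv O) : ℕ → ℕ → Expr O → ℕ → Prop where
  | var : ∀ (τin τout : ℕ) (x : ℕ), TypE Γ Δ τin τout (.var x) (Γ x)
  | op : ∀ (τin τout : ℕ) (o : O.Op) (es : Fin (O.ar o) → Expr O)
      (τs : Fin (O.ar o + 1) → ℕ), τs ∈ Δ o τin τout →
      (∀ i : Fin (O.ar o), TypE Γ Δ τin τout (es i) (τs i.castSucc)) →
      TypE Γ Δ τin τout (.op o es) (τs (Fin.last _))
  | declass : ∀ (τin τout : ℕ) (e : Expr O) (τ₁ τ : ℕ),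
      TypE Γ Δ τin τout e τ₁ →
      τ₁ ≤ τ → τ ≤ τout → TypE Γ Δ τin τout (.declass e) τ

/-- Typing judgments for statements: `Γ, Δ ⊢^{τin}_{τout} s : τ` (Figure 3). -/
inductive TypS (Γ : ℕ → ℕ) (Δ : OpEnv O) : ℕ → ℕ → Stmt O → ℕ → Prop where
  | sub : ∀ (τin τout : ℕ) (s : Stmt O) (τ₁ τ₂ : ℕ),
      TypS Γ Δ τin τout s τ₁ → τ₁ ≤ τ₂ → TypS Γ Δ τin τout s τ₂
  | skip : ∀ τin τout : ℕ, TypS Γ Δ τin τout .skip 0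
  | assign : ∀ (τin τout : ℕ) (x : ℕ) (e : Expr O) (τ₂ : ℕ),
      TypE Γ Δ τin τout e τ₂ → (τout = 0 ∨ Γ x ≤ τ₂) →
      TypS Γ Δ τin τout (.assign x e) (Γ x)
  | seq : ∀ (τin τout : ℕ) (s₁ s₂ : Stmt O) (τ : ℕ),
      TypS Γ Δ τin τout s₁ τ → TypS Γ Δ τin τout s₂ τ →
      TypS Γ Δ τin τout (.seq s₁ s₂) τ
  | cond : ∀ (τin τout : ℕ) (e : Expr O) (s₁ s₀ : Stmt O) (τ : ℕ),
      TypE Γ Δ τin τout e τ → TypS Γ Δ τin τout s₁ τ → TypS Γ Δ τin τout s₀ τ →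
      TypS Γ Δ τin τout (.ite e s₁ s₀) τ
  | whileNested : ∀ (τin τout : ℕ) (e : Expr O) (s : Stmt O) (τ : ℕ),
      TypE Γ Δ τ τout e τ → TypS Γ Δ τ τout s τ → 1 ≤ τ → τ ≤ τout →
      TypS Γ Δ τin τout (.whileLoop e s) τ
  | whileInit : ∀ (e : Expr O) (s : Stmt O) (τ : ℕ),
      TypE Γ Δ τ τ e τ → TypS Γ Δ τ τ s τ → 1 ≤ τ →
      TypS Γ Δ 0 0 (.whileLoop e s) τ
  | brk : ∀ (τin τout : ℕ) (e : Expr O) (τ : ℕ),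
      TypE Γ Δ τin τout e τ → τin ≤ τ → TypS Γ Δ τin τout (.brk e) τin

/-- A safe operator typing environment (Definition 2.2). -/
def SafeOpEnv [Fintype σ] [DecidableEq σ] (zero one : σ) (Δ : OpEnv O) : Prop :=
  ∀ o : O.Op,
    (NeutralOp zero one O o ∨ PositiveOp O o ∨ PolyOp O o) ∧
    InFP (O.sem o) ∧
    ∀ (τin τout : ℕ) (τs : Fin (O.ar o + 1) → ℕ), τs ∈ Δ o τin τout →
      (NeutralOp zero one O o →
        ∀ i : Fin (O.ar o), τs (Fin.last _) ≤ τs i.castSucc) ∧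
      ((PositiveOp O o ∧ ¬ NeutralOp zero one O o) →
        (∀ i : Fin (O.ar o), τs (Fin.last _) ≤ τs i.castSucc) ∧
        (τs (Fin.last _) < τin ∨ τs (Fin.last _) = 0)) ∧
      ((PolyOp O o ∧ ¬ PositiveOp O o) → τout = 0)

/-- `P ∈ ΔSAFE`. -/
def DeltaSafe (Δ : OpEnv O) (P : Prog O) : Prop :=
  ∃ (Γ : ℕ → ℕ) (τ : ℕ), TypS Γ Δ 0 0 P.body τ

/-- `P ∈ SAFE`. -/
def Safe [Fintype σ] [DecidableEq σ] (zero one : σ) (P : Prog O) : Prop :=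
  ∃ Δ : OpEnv O, SafeOpEnv zero one Δ ∧ DeltaSafe Δ P

/-! ### Aperiodicity -/

/-- The set `U(e)` of undeclassified variables of an expression. -/
def undecl : Expr O → Set ℕ
  | .var x => {x}
  | .op _ es => ⋃ i, undecl (es i)
  | .declass _ => ∅

/-- `μ ≡_e μ'`: the stores agree on all undeclassified variables of `e`. -/
def EquivOn (e : Expr O) (μ μ' : Store σ) : Prop :=
  ∀ x ∈ undecl e, μ x = μ' x

/-- One step of the subtree relation of the (possibly infinite) evaluation tree:
`SubConf one c c'` holds iff `π_{c'}` is an immediate (statement-)subtree of `π_c`. -/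
inductive SubConf (one : σ) : Store σ × Stmt O → Store σ × Stmt O → Prop where
  | seq_left : ∀ (μ : Store σ) (s₁ s₂ : Stmt O), SubConf one (μ, .seq s₁ s₂) (μ, s₁)
  | seq_right : ∀ (μ μ' : Store σ) (s₁ s₂ : Stmt O),
      EvalS one μ s₁ (true, μ') → SubConf one (μ, .seq s₁ s₂) (μ', s₂)
  | ite_true : ∀ (μ : Store σ) (e : Expr O) (s₁ s₀ : Stmt O),
      EvalE one μ e [one] → SubConf one (μ, .ite e s₁ s₀) (μ, s₁)
  | ite_false : ∀ (μ : Store σ) (e : Expr O) (s₁ s₀ : Stmt O) (w : Word σ),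
      EvalE one μ e w → w ≠ [one] → SubConf one (μ, .ite e s₁ s₀) (μ, s₀)
  | while_true : ∀ (μ : Store σ) (e : Expr O) (s : Stmt O),
      EvalE one μ e [one] →
      SubConf one (μ, .whileLoop e s) (μ, .seq s (.whileLoop e s))

/-- No while loop reachable from `(μ, s₀)` is ever evaluated twice (one occurrence
strictly inside the other) under `e`-equivalent stores. -/
def NoRepeat (one : σ) (s₀ : Stmt O) (μ : Store σ) : Prop :=
  ¬ ∃ (e : Expr O) (s : Stmt O) (μ' μ'' : Store σ),
      Relation.ReflTransGen (SubConf one) (μ, s₀) (μ', .whileLoop e s) ∧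
      Relation.TransGen (SubConf one) (μ', .whileLoop e s) (μ'', .whileLoop e s) ∧
      EquivOn e μ' μ''

/-- `P ∈ AP`: `P` is aperiodic. -/
def Aperiodic (one : σ) (P : Prog O) : Prop :=
  ∀ μ : Store σ, NoRepeat one P.body μ


/-! ### The program of Listing 2 -/

/-- Operators of Listing 2: the boolean constant `true`, binary decrement `−1`,
and the positivity test `> 0`. -/
inductive Op2 : Type where
  | trueC | decB | gt0B

/-- Arities. -/
def ar2 : Op2 → ℕ
  | .trueC => 0
  | _ => 1

/-- The number denoted by a binary numeral over `Bool` (`false = 0`, `true = 1`). -/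
def bval (w : Word Bool) : ℕ := w.foldl (fun n b => 2 * n + cond b 1 0) 0

/-- The canonical binary numeral of a natural number. -/
def btoW (n : ℕ) : Word Bool := (Nat.bits n).reverse

/-- Semantics: `−1` is binary decrement on binary numerals, and `>0` tests that
its argument denotes a positive number. -/
def sem2 : (o : Op2) → (Fin (ar2 o) → Word Bool) → Word Bool
  | .trueC, _ => [true]
  | .decB, ws => btoW (bval (ws ⟨0, by decide⟩) - 1)
  | .gt0B, ws => if 0 < bval (ws ⟨0, by decide⟩) then [true] else [false]

/-- The operator signature of Listing 2. -/
def sig2 : OpSig Bool where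
  Op := Op2
  ar := ar2
  sem := sem2

/-- Variables: `x = 0`, `y = 1`.  The body of Listing 2:
`x := true; while(x){ y := y−1; x := declass(y > 0) }`. -/
def expBody₂ : Stmt sig2 :=
  .seq (.assign 0 (.op .trueC ![])) <|
  .whileLoop (.var 0)
    (.seq (.assign 1 (.op .decB ![.var 1]))
          (.assign 0 (.declass (.op .gt0B ![.var 1]))))

/-- The program `P₂` of Listing 2 (input `y`, output `y`). -/
def P₂ : Prog sig2 where
  arity := 1
  params := ![1]
  body := expBody₂
  ret := 1

/-- The variable typing environment with `Γ(x) = 1` and `Γ(y) = 0`. -/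
def Γ₂ : ℕ → ℕ := fun v => if v = 0 then 1 else 0

/-!
Give every operator the output level `0`. All three operators of Listing 2 are positive (their
results are at most one symbol longer than their arguments), so this environment is safe as soon as
each operator is polynomial-time computable, which explicit three-stack machines show; with
`Γ(x) = 1` and `Γ(y) = 0` the body then types at level `1`.

Declassifying the boolean `y > 0` yields `1^1 = true`, so every iteration of the loop body resets
`x` to `true`, and the loop is re-entered with the same value of `x`, the only undeclassified
variable of its guard. This happens on every input.
-/

open Turing StateTransition TM2.Stmt

section BinaryNumerals

def lsbVal (l : List Bool) : ℕ := l.foldr Nat.bit 0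

@[simp] lemma lsbVal_nil : lsbVal [] = 0 := rfl

@[simp] lemma lsbVal_cons (b : Bool) (l : List Bool) : lsbVal (b :: l) = Nat.bit b (lsbVal l) :=
  rfl

lemma bval_eq_lsbVal_reverse (w : Word Bool) : bval w = lsbVal w.reverse := by
  rw [bval, List.foldl_eq_foldr_reverse, lsbVal]
  congr
  funext b n
  cases b <;> simp [Nat.bit_val]

lemma lsbVal_pos_iff (l : List Bool) : 0 < lsbVal l ↔ true ∈ l := by
  induction l with
  | nil => simp
  | cons b t ih => cases b <;> simp [Nat.bit_val, ← ih]

lemma lsbVal_append_false (l : List Bool) : lsbVal (l ++ [false]) = lsbVal l := by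
  induction l with
  | nil => rfl
  | cons b t ih => simp [ih]

lemma bits_lsbVal_append_true (l : List Bool) : (lsbVal (l ++ [true])).bits = l ++ [true] := by
  induction l with
  | nil => exact Nat.one_bits
  | cons b t ih =>
    have hpos : lsbVal (t ++ [true]) ≠ 0 := ((lsbVal_pos_iff _).2 (by simp)).ne'
    rw [List.cons_append, lsbVal_cons, Nat.bits_append_bit _ _ (fun h => absurd h hpos), ih]

lemma btoW_bval (w : Word Bool) : btoW (bval w) = w.dropWhile (!·) := by
  induction w with
  | nil => simp [btoW, bval]
  | cons b t ih =>
    cases b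
    · simpa [bval_eq_lsbVal_reverse, lsbVal_append_false] using ih
    · simp [btoW, bval_eq_lsbVal_reverse, bits_lsbVal_append_true]

def subBorrow : Bool → List Bool → List Bool
  | _, [] => []
  | m, b :: t => (m ^^ b) :: subBorrow (m && !b) t

@[simp] lemma length_subBorrow (m : Bool) (l : List Bool) : (subBorrow m l).length = l.length := by
  induction l generalizing m <;> simp [subBorrow, *]

lemma lsbVal_subBorrow (m : Bool) (l : List Bool) (h : m = true → true ∈ l) :
    lsbVal (subBorrow m l) = lsbVal l - m.toNat := by
  induction l generalizing m with
  | nil => cases m <;> simp_all [subBorrow]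
  | cons b t ih =>
    have ht : (m && !b) = true → true ∈ t := by cases m <;> cases b <;> simp_all
    have hpos := fun h => (lsbVal_pos_iff t).2 (ht h)
    rw [subBorrow, lsbVal_cons, lsbVal_cons, ih _ ht]
    cases m <;> cases b <;> simp_all [Nat.bit_val]
    omega

/-- A borrow surviving the whole numeral means that it denoted `0`, whose predecessor is `0` too
(truncated subtraction), so then all digits are dropped. -/
lemma dropWhile_reverse_subBorrow (l : List Bool) :
    (subBorrow true l).reverse.dropWhile (fun b => l.all (!·) || !b) = btoW (lsbVal l - 1) := by
  by_cases h : true ∈ l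
  · have hall : l.all (!·) = false := by simpa using h
    have hsub := lsbVal_subBorrow true l (fun _ => h)
    rw [Bool.toNat_true] at hsub
    rw [hall, ← hsub, ← List.reverse_reverse (subBorrow true l), ← bval_eq_lsbVal_reverse,
      btoW_bval, List.reverse_reverse]
    rfl
  · have hall : l.all (!·) = true := by simpa using h
    have hzero : lsbVal l = 0 := Nat.eq_zero_of_not_pos (by rwa [lsbVal_pos_iff])
    simp [hall, hzero, btoW]

lemma length_btoW_bval_sub_one_le (w : Word Bool) : (btoW (bval w - 1)).length ≤ w.length := by
  rw [bval_eq_lsbVal_reverse, ← dropWhile_reverse_subBorrow]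
  exact (List.length_dropWhile_le _ _).trans (by simp)

end BinaryNumerals

section StackMachines

def _root_.StateTransition.EvalsToInTime.mono {α : Type*} {f : α → Option α} {a : α}
    {b : Option α} {m m' : ℕ} (h : EvalsToInTime f a b m) (hm : m ≤ m') :
    EvalsToInTime f a b m' :=
  ⟨h.toEvalsTo, h.steps_le_m.trans hm⟩

def _root_.StateTransition.EvalsToInTime.head {α : Type*} {f : α → Option α} {a b : α}
    {c : Option α} {m : ℕ} (hab : f a = some b) (h : EvalsToInTime f b c m) :
    EvalsToInTime f a c (m + 1) :=
  EvalsToInTime.trans f 1 m a b c ⟨⟨1, hab⟩, le_rfl⟩ h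

inductive StackId
  | input
  | aux
  | output
  deriving DecidableEq

instance : Fintype StackId := ⟨{.input, .aux, .output}, fun k => by cases k <;> simp⟩

/-- The input stack holds the tuple encoding, in which `none` separates the arguments. -/
abbrev StackId.alph : StackId → Type
  | .input => Option Bool
  | _ => Bool

/-- The last popped symbol and a one-bit flag. -/
abbrev Register := Option Bool × Bool

@[simp] def stacksOf (i : List (Option Bool)) (a o : List Bool) : ∀ k : StackId, List k.alph
  | .input => i
  | .aux => a
  | .output => o

@[simp] lemma update_stacksOf_input (i a o i') :
    Function.update (stacksOf i a o) .input i' = stacksOf i' a o := by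
  funext k; cases k <;> rfl

@[simp] lemma update_stacksOf_aux (i a o a') :
    Function.update (stacksOf i a o) .aux a' = stacksOf i a' o := by
  funext k; cases k <;> rfl

@[simp] lemma update_stacksOf_output (i a o o') :
    Function.update (stacksOf i a o) .output o' = stacksOf i a o' := by
  funext k; cases k <;> rfl

abbrev machine {Λ : Type} [Fintype Λ] (main : Λ)
    (prog : Λ → TM2.Stmt StackId.alph Λ Register) : FinTM2 where
  k₀ := .input
  k₁ := .output
  Γ := StackId.alph
  Λ := Λ
  main := main
  σ := Register
  initialState := (none, false)
  Γk₀Fin := inferInstanceAs (Fintype (Option Bool))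
  m := prog

variable {Λ : Type} [Fintype Λ]

lemma initList_machine (main : Λ) (prog : Λ → TM2.Stmt StackId.alph Λ Register)
    (l : List (Option Bool)) :
    initList (machine main prog) l = ⟨some main, (none, false), stacksOf l [] []⟩ := by
  simp only [initList]; congr; funext k; cases k <;> rfl

lemma haltList_machine (main : Λ) (prog : Λ → TM2.Stmt StackId.alph Λ Register)
    (l : List Bool) :
    haltList (machine main prog) l = ⟨none, (none, false), stacksOf [] [] l⟩ := by
  simp only [haltList]; congr; funext k; cases k <;> rfl

lemma inFP_of_evalsToInTime {n : ℕ} (f : (Fin n → Word Bool) → Word Bool) (main : Λ)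
    (prog : Λ → TM2.Stmt StackId.alph Λ Register) (time : Polynomial ℕ)
    (h : ∀ ws, Nonempty (EvalsToInTime (TM2.step prog)
      ⟨some main, (none, false), stacksOf ((tupleEncoding Bool n).encode ws) [] []⟩
      (some ⟨none, (none, false), stacksOf [] [] (f ws)⟩)
      (time.eval ((tupleEncoding Bool n).encode ws).length))) :
    InFP f := by
  refine ⟨⟨⟨machine main prog, .refl _, .refl _⟩, time, fun ws => ?_⟩⟩
  show EvalsToInTime (TM2.step prog)
    (initList (machine main prog) (List.map id ((tupleEncoding Bool n).encode ws)))
    (some (haltList (machine main prog) (List.map id (f ws)))) _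
  rw [List.map_id, List.map_id, initList_machine, haltList_machine]
  exact (h ws).some

lemma tupleEncoding_zero_encode (ws : Fin 0 → Word Bool) :
    (tupleEncoding Bool 0).encode ws = [] := by
  simp [tupleEncoding, List.intercalate]

lemma tupleEncoding_one_encode (ws : Fin 1 → Word Bool) :
    (tupleEncoding Bool 1).encode ws = (ws 0).map some := by
  simp [tupleEncoding, List.intercalate, List.ofFn_succ]

end StackMachines

section Decrement

inductive DecLabel
  | moveToAux
  | subtract
  | strip
  deriving DecidableEq

instance : Fintype DecLabel :=
  ⟨{.moveToAux, .subtract, .strip}, fun l => by cases l <;> simp⟩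

/-- Copies the msb-first input onto `aux`, which reverses it; subtracts one lsb-first, with the
borrow in the flag, pushing the digits onto `output`, which reverses them back; then pops the
leading zeros, or everything if the borrow survived. -/
def decProg : DecLabel → TM2.Stmt StackId.alph DecLabel Register
  | .moveToAux => pop .input (fun s x => (x.bind id, s.2))
      (branch (fun s => s.1.isSome)
        (push .aux (fun s => s.1.getD false) (goto fun _ => .moveToAux))
        (load (fun _ => (none, true)) (goto fun _ => .subtract)))
  | .subtract => pop .aux (fun s x => (x, s.2))
      (branch (fun s => s.1.isSome)
        (push .output (fun s => s.2 ^^ s.1.getD false)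
          (load (fun s => (none, s.2 && !s.1.getD false)) (goto fun _ => .subtract)))
        (goto fun _ => .strip))
  | .strip => pop .output (fun s x => (x, s.2))
      (branch (fun s => s.1.isSome && (s.2 || !s.1.getD false))
        (goto fun _ => .strip)
        (branch (fun s => s.1.isSome)
          (push .output (fun s => s.1.getD false) (load (fun _ => (none, false)) halt))
          (load (fun _ => (none, false)) halt)))

lemma step_moveToAux_cons (s : Register) (b : Bool) (i a o) :
    TM2.step decProg ⟨some .moveToAux, s, stacksOf (some b :: i) a o⟩
      = some ⟨some .moveToAux, (some b, s.2), stacksOf i (b :: a) o⟩ := by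
  simp [decProg]

lemma step_moveToAux_nil (s : Register) (a o) :
    TM2.step decProg ⟨some .moveToAux, s, stacksOf [] a o⟩
      = some ⟨some .subtract, (none, true), stacksOf [] a o⟩ := by
  simp [decProg]

lemma step_subtract_cons (p : Option Bool) (m b : Bool) (a o) :
    TM2.step decProg ⟨some .subtract, (p, m), stacksOf [] (b :: a) o⟩
      = some ⟨some .subtract, (none, m && !b), stacksOf [] a ((m ^^ b) :: o)⟩ := by
  simp [decProg]

lemma step_subtract_nil (p : Option Bool) (m : Bool) (o) :
    TM2.step decProg ⟨some .subtract, (p, m), stacksOf [] [] o⟩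
      = some ⟨some .strip, (none, m), stacksOf [] [] o⟩ := by
  simp [decProg]

lemma step_strip (p : Option Bool) (q : Bool) (o) :
    TM2.step decProg ⟨some .strip, (p, q), stacksOf [] [] o⟩
      = some (match o with
        | [] => ⟨none, (none, false), stacksOf [] [] []⟩
        | b :: t => if q || !b then ⟨some .strip, (some b, q), stacksOf [] [] t⟩
            else ⟨none, (none, false), stacksOf [] [] (b :: t)⟩) := by
  cases o with
  | nil => simp [decProg]
  | cons b t => cases q <;> cases b <;> simp [decProg]

def moveToAuxRun : (w : List Bool) → (s : Register) → (a : List Bool) →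
    EvalsToInTime (TM2.step decProg) ⟨some .moveToAux, s, stacksOf (w.map some) a []⟩
      (some ⟨some .subtract, (none, true), stacksOf [] (w.reverse ++ a) []⟩) (w.length + 1)
  | [], s, a => (EvalsToInTime.refl _ _).head (step_moveToAux_nil s a [])
  | b :: t, s, a => by
    rw [List.reverse_cons, List.append_assoc, List.singleton_append]
    exact (moveToAuxRun t _ (b :: a)).head (step_moveToAux_cons s b _ a [])

def subtractRun : (l : List Bool) → (p : Option Bool) → (m : Bool) → (o : List Bool) →
    EvalsToInTime (TM2.step decProg) ⟨some .subtract, (p, m), stacksOf [] l o⟩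
      (some ⟨some .strip, (none, m && l.all (!·)), stacksOf [] [] ((subBorrow m l).reverse ++ o)⟩)
      (l.length + 1)
  | [], p, m, o => by
    rw [List.all_nil, Bool.and_true]
    exact (EvalsToInTime.refl _ _).head (step_subtract_nil p m o)
  | b :: t, p, m, o => by
    rw [List.all_cons, ← Bool.and_assoc, subBorrow, List.reverse_cons, List.append_assoc,
      List.singleton_append]
    exact (subtractRun t none (m && !b) _).head (step_subtract_cons p m b t o)

def stripRun : (o : List Bool) → (p : Option Bool) → (q : Bool) →
    EvalsToInTime (TM2.step decProg) ⟨some .strip, (p, q), stacksOf [] [] o⟩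
      (some ⟨none, (none, false), stacksOf [] [] (o.dropWhile (fun b => q || !b))⟩)
      (o.length + 1)
  | [], p, q => (EvalsToInTime.refl _ _).head (step_strip p q [])
  | b :: t, p, q => by
    have h := step_strip p q (b :: t)
    rw [List.dropWhile_cons]
    by_cases hb : (q || !b) = true
    · simp only [hb, if_true] at h ⊢
      exact (stripRun t _ q).head h
    · simp only [hb, if_false, Bool.false_eq_true] at h ⊢
      exact ((EvalsToInTime.refl _ _).head h).mono (by simp)

lemma decProg_evalsToInTime (w : Word Bool) : Nonempty (EvalsToInTime (TM2.step decProg)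
    ⟨some .moveToAux, (none, false), stacksOf (w.map some) [] []⟩
    (some ⟨none, (none, false), stacksOf [] [] (btoW (bval w - 1))⟩) (3 * w.length + 3)) := by
  have move := moveToAuxRun w (none, false) []
  rw [List.append_nil] at move
  have run := move.trans _ _ _ _ _ _
    ((subtractRun w.reverse none true []).trans _ _ _ _ _ _ (stripRun _ none _))
  rw [List.append_nil, Bool.true_and, dropWhile_reverse_subBorrow,
    ← bval_eq_lsbVal_reverse] at run
  exact ⟨run.mono (by simp only [List.length_reverse, length_subBorrow]; omega)⟩

lemma inFP_btoW_bval_sub_one : InFP fun ws : Fin 1 → Word Bool => btoW (bval (ws 0) - 1) :=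
  inFP_of_evalsToInTime _ DecLabel.moveToAux decProg (3 * .X + 3) fun ws => by
    rw [tupleEncoding_one_encode]
    simpa using decProg_evalsToInTime (ws 0)

end Decrement

section Positivity

def posProg : Unit → TM2.Stmt StackId.alph Unit Register
  | () => pop .input (fun s x => (x.bind id, s.2 || (x.bind id).getD false))
      (branch (fun s => s.1.isSome) (goto fun _ => ())
        (push .output (fun s => s.2) (load (fun _ => (none, false)) halt)))

lemma step_posProg_cons (s : Register) (b : Bool) (i) :
    TM2.step posProg ⟨some (), s, stacksOf (some b :: i) [] []⟩
      = some ⟨some (), (some b, s.2 || b), stacksOf i [] []⟩ := by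
  simp [posProg]

lemma step_posProg_nil (s : Register) :
    TM2.step posProg ⟨some (), s, stacksOf [] [] []⟩
      = some ⟨none, (none, false), stacksOf [] [] [s.2]⟩ := by
  simp [posProg]

def posProgRun : (w : List Bool) → (s : Register) →
    EvalsToInTime (TM2.step posProg) ⟨some (), s, stacksOf (w.map some) [] []⟩
      (some ⟨none, (none, false), stacksOf [] [] [w.any id || s.2]⟩) (w.length + 1)
  | [], s => (EvalsToInTime.refl _ _).head (step_posProg_nil s)
  | b :: t, s => by
    rw [show ((b :: t).any id || s.2) = (t.any id || (s.2 || b)) by cases b <;> simp]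
    exact (posProgRun t _).head (step_posProg_cons s b _)

lemma inFP_bval_pos :
    InFP fun ws : Fin 1 → Word Bool => if 0 < bval (ws 0) then [true] else [false] :=
  inFP_of_evalsToInTime _ () posProg (.X + 1) fun ws => by
    have h : (if 0 < bval (ws 0) then [true] else [false]) = [(ws 0).any id] := by
      cases hw : (ws 0).any id <;> simp_all [bval_eq_lsbVal_reverse, lsbVal_pos_iff]
    have run := posProgRun (ws 0) (none, false)
    rw [Bool.or_false] at run
    rw [tupleEncoding_one_encode, h]
    exact ⟨run.mono (by simp)⟩

end Positivity

def trueProg : Unit → TM2.Stmt StackId.alph Unit Register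
  | () => push .output (fun _ => true) halt

lemma inFP_const_true : InFP fun _ : Fin 0 → Word Bool => [true] :=
  inFP_of_evalsToInTime _ () trueProg 1 fun ws => by
    rw [tupleEncoding_zero_encode]
    exact ⟨((EvalsToInTime.refl _ _).head (by simp [trueProg])).mono (by simp)⟩

section Safety

lemma length_le_maxSize {k : ℕ} (ws : Fin k → Word σ) (i : Fin k) :
    (ws i).length ≤ maxSize ws :=
  Finset.le_sup (f := fun i => (ws i).length) (Finset.mem_univ i)

def zeroOutputEnv (O : OpSig σ) : OpEnv O := fun _ _ _ => {τs | τs (Fin.last _) = 0}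

lemma safeOpEnv_zeroOutputEnv [Fintype σ] [DecidableEq σ] (zero one : σ)
    (hpos : ∀ o, PositiveOp O o) (hfp : ∀ o, InFP (O.sem o)) :
    SafeOpEnv zero one (zeroOutputEnv O) := by
  intro o
  refine ⟨.inr (.inl (hpos o)), hfp o, fun τin τout τs (hτs : τs (Fin.last _) = 0) => ?_⟩
  simp only [hτs, zero_le, implies_true, true_and, or_true]
  exact fun h => absurd (hpos o) h.2

lemma length_sem2_gt0B (ws : Fin 1 → Word Bool) : (sig2.sem Op2.gt0B ws).length = 1 := by
  simp only [sig2, sem2]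
  split <;> rfl

lemma positiveOp_sig2 (o : Op2) : PositiveOp sig2 o := by
  cases o with
  | trueC => exact ⟨1, fun _ => by simp [sig2, sem2]⟩
  | decB => exact ⟨0, fun ws => (length_btoW_bval_sub_one_le _).trans (length_le_maxSize ws _)⟩
  | gt0B => exact ⟨1, fun ws => (length_sem2_gt0B ws).trans_le (Nat.le_add_left 1 _)⟩

lemma inFP_sem2 (o : Op2) : InFP (sig2.sem o) := by
  cases o
  exacts [inFP_const_true, inFP_btoW_bval_sub_one, inFP_bval_pos]

lemma typS_expBody₂ : TypS Γ₂ (zeroOutputEnv sig2) 0 0 expBody₂ 1 := by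
  have hy : TypE Γ₂ (zeroOutputEnv sig2) 1 1 (.var 1) 0 := .var 1 1 1
  have hinit : TypS Γ₂ (zeroOutputEnv sig2) 0 0 (.assign 0 (.op .trueC ![])) 1 :=
    .assign 0 0 0 _ 0 (.op 0 0 _ _ (fun _ => 0) rfl fun i => i.elim0) (.inl rfl)
  have hdec : TypS Γ₂ (zeroOutputEnv sig2) 1 1 (.assign 1 (.op .decB ![.var 1])) 1 :=
    .sub _ _ _ 0 1 (.assign 1 1 1 _ 0 (.op 1 1 _ _ (fun _ => 0) rfl (Fin.forall_fin_one.2 hy))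
      (.inr le_rfl)) zero_le_one
  have hguard :
      TypS Γ₂ (zeroOutputEnv sig2) 1 1 (.assign 0 (.declass (.op .gt0B ![.var 1]))) 1 :=
    .assign 1 1 0 _ 1
      (.declass 1 1 _ 0 1 (.op 1 1 _ _ (fun _ => 0) rfl (Fin.forall_fin_one.2 hy))
        zero_le_one le_rfl) (.inr le_rfl)
  exact .seq 0 0 _ _ 1 hinit (.whileInit _ _ 1 (.var 1 1 0) (.seq 1 1 _ _ 1 hdec hguard) le_rfl)

end Safety

section Aperiodicity

lemma equivOn_var {x : ℕ} {μ μ' : Store σ} :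
    EquivOn (Expr.var (O := O) x) μ μ' ↔ μ x = μ' x := by
  simp [EquivOn, undecl]

lemma transGen_subConf_whileLoop {one : σ} {μ μ' : Store σ} {e : Expr O} {s : Stmt O}
    (he : EvalE one μ e [one]) (hs : EvalS one μ s (true, μ')) :
    Relation.TransGen (SubConf one) (μ, .whileLoop e s) (μ', .whileLoop e s) :=
  .head (.while_true μ e s he) (.single (.seq_right μ μ' s _ hs))

lemma not_noRepeat_of_guard_restored {one : σ} {s₀ s : Stmt O} {μ₀ μ μ' : Store σ} {x : ℕ}
    (hreach : Relation.ReflTransGen (SubConf one) (μ₀, s₀) (μ, .whileLoop (.var x) s))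
    (hx : μ x = [one]) (hs : EvalS one μ s (true, μ')) (hx' : μ' x = μ x) :
    ¬ NoRepeat one s₀ μ₀ := fun h =>
  h ⟨.var x, s, μ, μ', hreach, transGen_subConf_whileLoop (hx ▸ .var μ x) hs,
    equivOn_var.2 hx'.symm⟩

lemma exists_evalS_loopBody (μ : Store Bool) : ∃ μ',
    EvalS true μ (.seq (.assign 1 (.op Op2.decB ![.var 1]))
      (.assign 0 (.declass (.op Op2.gt0B ![.var 1]))) : Stmt sig2) (true, μ') ∧
      μ' 0 = [true] := by
  have hdec : EvalE true μ (.op Op2.decB ![.var 1] : Expr sig2) (sig2.sem Op2.decB ![μ 1]) :=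
    .op _ _ _ _ (Fin.forall_fin_one.2 (.var μ 1))
  set μ₁ := Function.update μ 1 (sig2.sem Op2.decB ![μ 1])
  have hpos : EvalE true μ₁ (.op Op2.gt0B ![.var 1] : Expr sig2) (sig2.sem Op2.gt0B ![μ₁ 1]) :=
    .op _ _ _ _ (Fin.forall_fin_one.2 (.var μ₁ 1))
  exact ⟨_, .seq_top _ _ _ _ _ (.assign _ _ _ _ hdec) (.assign _ _ _ _ (.declass _ _ _ hpos)),
    by simp [length_sem2_gt0B]⟩

lemma not_noRepeat_expBody₂ (μ : Store Bool) : ¬ NoRepeat true expBody₂ μ := by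
  obtain ⟨μ', hbody, hx'⟩ := exists_evalS_loopBody (Function.update μ 0 [true])
  have hinit : EvalE true μ (.op Op2.trueC ![] : Expr sig2) [true] :=
    .op μ _ _ ![] fun i => i.elim0
  exact not_noRepeat_of_guard_restored (.single (.seq_right _ _ _ _ (.assign _ _ _ _ hinit)))
    (by simp) hbody (by simp [hx'])

end Aperiodicity

/-- **Listing 2 is safe but not aperiodic**: `P₂` is `Δ`-safe for the variable
typing environment `Γ₂` (with `Γ(x) = 1`, `Γ(y) = 0`) and a suitable safe
operator typing environment `Δ`, but it is not aperiodic: on some input store,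
the while loop is evaluated under two guard-equivalent stores, one within the
evaluation subtree of the other. -/
theorem listing2_safe_not_aperiodic :
    (∃ Δ : OpEnv sig2, SafeOpEnv false true Δ ∧
      ∃ τ : ℕ, TypS Γ₂ Δ 0 0 expBody₂ τ) ∧
    ∃ w : Word Bool,
      ¬ NoRepeat true expBody₂ (Function.update (fun _ => []) 1 w) :=
  ⟨⟨zeroOutputEnv sig2, safeOpEnv_zeroOutputEnv false true positiveOp_sig2 inFP_sem2,
      1, typS_expBody₂⟩,
    [true, false], not_noRepeat_expBody₂ _⟩

end Declass
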